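/- Let A and B be finite nonempty types, let e₀ and e₁ be the standard basis vectors of ℂ^A at two distinct elements 0 and 1 of A, and let U be a unitary matrix in Matrix.unitaryGroup (A × B) ℂ. For b ∈ {0,1} and φ : B → ℂ write ψ_b(φ) = U.mulVec (e_b ⊗ φ). If there is NO unitary matrix S ∈ Matrix.unitaryGroup A ℂ such that (S ⊗ I).mulVec (ψ₀ φ) = ψ₁ φ holds for every φ : B → ℂ, then there exists a vector φ : B → ℂ with ptrA (ψ₀ φ) ≠ ptrA (ψ₁ φ). (A perfectly binding non-static quantum bit commitment cannot be perfectly concealing: for some receiver state φ the receiver's reduced density matrix depends on the committed bit.) -/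

import Mathlib

open scoped ComplexOrder
open Matrix

noncomputable section

/-- Partial trace over `A` of the outer product `|ψ⟩⟨ψ|`:
`(ptrA ψ) j q = ∑ i, ψ (i, j) * conj (ψ (i, q))`. -/
def ptrA {A B : Type*} [Fintype A] (ψ : A × B → ℂ) : Matrix B B ℂ :=
  fun j q => ∑ i : A, ψ (i, j) * (starRingEnd ℂ) (ψ (i, q))

/-- The Kronecker product `S ⊗ I` with the identity on `B`, as a matrix on `A × B`. -/
def kronId {A B : Type*} [DecidableEq B] (S : Matrix A A ℂ) : Matrix (A × B) (A × B) ℂ :=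
  Matrix.kroneckerMap (· * ·) S (1 : Matrix B B ℂ)

/-- `ptrA ψ` is a Gram matrix, hence positive semidefinite. -/
lemma ptrA_posSemidef {A B : Type*} [Fintype A] [Fintype B] (ψ : A × B → ℂ) :
    (ptrA ψ).PosSemidef := by
  set V : Matrix A B ℂ := Matrix.of fun i j => (starRingEnd ℂ) (ψ (i, j)) with hV
  have h := Matrix.posSemidef_conjTranspose_mul_self V
  have heq : ptrA ψ = Vᴴ * V := by
    ext j q
    simp [Matrix.mul_apply, Matrix.conjTranspose_apply, ptrA, hV, mul_comm]
  rw [heq]; exact h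

/-- The square root of a positive semidefinite matrix, as Mathlib defined it in December 2024. -/
def Matrix.PosSemidef.sqrt {n 𝕜 : Type*} [Fintype n] [DecidableEq n] [RCLike 𝕜]
    {A : Matrix n n 𝕜} (hA : A.PosSemidef) : Matrix n n 𝕜 :=
  (hA.1.eigenvectorUnitary : Matrix n n 𝕜) *
    diagonal ((↑) ∘ Real.sqrt ∘ hA.1.eigenvalues) * (star (hA.1.eigenvectorUnitary : Matrix n n 𝕜))

lemma Matrix.PosSemidef.posSemidef_sqrt {n 𝕜 : Type*} [Fintype n] [DecidableEq n] [RCLike 𝕜]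
    {A : Matrix n n 𝕜} (hA : A.PosSemidef) : hA.sqrt.PosSemidef := by
  rw [Matrix.PosSemidef.sqrt, Matrix.star_eq_conjTranspose]
  apply Matrix.PosSemidef.mul_mul_conjTranspose_same
  refine Matrix.posSemidef_diagonal_iff.mpr fun i => ?_
  exact RCLike.ofReal_nonneg.mpr (Real.sqrt_nonneg _)

lemma sqrt_mul_mul_sqrt_posSemidef {B : Type*} [Fintype B] [DecidableEq B]
    {ρ σ : Matrix B B ℂ} (hρ : ρ.PosSemidef) (hσ : σ.PosSemidef) :
    (hρ.sqrt * σ * hρ.sqrt).PosSemidef := by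
  have h := hσ.mul_mul_conjTranspose_same hρ.sqrt
  rwa [hρ.posSemidef_sqrt.isHermitian.eq] at h

/-- The fidelity `F(ρ, σ) = tr √(√ρ * σ * √ρ)` of two positive semidefinite matrices. -/
def fidelity {B : Type*} [Fintype B] [DecidableEq B] {ρ σ : Matrix B B ℂ}
    (hρ : ρ.PosSemidef) (hσ : σ.PosSemidef) : ℝ :=
  ((sqrt_mul_mul_sqrt_posSemidef hρ hσ).sqrt.trace).re

/-!
Suppose the reduced states agree for every `φ`. Polarization upgrades this to equality of the
sesquilinear quantities `∑ i, ψ₀ φ (i, j) * conj (ψ₀ φ' (i, q))`, i.e. the vectors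
`ψ_b φ (·, j) ∈ ℂ^A` for `b = 0, 1` have the same Gram matrix. Two families with the same Gram
matrix differ by an isometry of `ℂ^A`: define it on the span of the first family and extend it.
Its matrix `S` is unitary and `S ⊗ I` maps `ψ₀ φ` to `ψ₁ φ` for every `φ`, contradicting binding.
-/

open scoped InnerProductSpace

theorem LinearMap.IsAlt.eq_zero {M N : Type*} [AddCommGroup M] [Module ℂ M] [AddCommGroup N]
    [Module ℂ N] {f : M →ₗ⋆[ℂ] M →ₗ[ℂ] N} (hf : f.IsAlt) : f = 0 := by
  ext x y
  have hI : Complex.I • f x y = Complex.I • f y x := by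
    simpa [Complex.conj_I] using hf.neg x (Complex.I • y)
  have hsymm : f x y = f y x := smul_right_injective N Complex.I_ne_zero hI
  have hanti : -f x y = f y x := hf.neg x y
  have htwo : (2 : ℂ) • f x y = 0 := by
    rw [two_smul]
    nth_rewrite 2 [hsymm]
    rw [← hanti, add_neg_cancel]
  simpa [two_ne_zero] using htwo

theorem LinearMap.exists_linearIsometry_comp_eq {𝕜 E F : Type*} [RCLike 𝕜] [AddCommGroup E]
    [Module 𝕜 E] [NormedAddCommGroup F] [InnerProductSpace 𝕜 F] [FiniteDimensional 𝕜 F]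
    (P₀ P₁ : E →ₗ[𝕜] F) (h : ∀ x, ‖P₀ x‖ = ‖P₁ x‖) :
    ∃ L : F →ₗᵢ[𝕜] F, ∀ x, L (P₀ x) = P₁ x := by
  have hker : LinearMap.ker P₀ ≤ LinearMap.ker P₁ := fun x hx => by
    rw [LinearMap.mem_ker, ← norm_eq_zero, ← h, norm_eq_zero]
    exact hx
  let f : LinearMap.range P₀ →ₗ[𝕜] F :=
    (LinearMap.ker P₀).liftQ P₁ hker ∘ₗ P₀.quotKerEquivRange.symm.toLinearMap
  have hf : ∀ x, f ⟨P₀ x, LinearMap.mem_range_self P₀ x⟩ = P₁ x := fun x => by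
    simp [f, LinearMap.quotKerEquivRange_symm_apply_image]
  let L : LinearMap.range P₀ →ₗᵢ[𝕜] F :=
    ⟨f, by rintro ⟨_, x, rfl⟩; rw [hf, ← h]; rfl⟩
  exact ⟨L.extend, fun x => (L.extend_apply ⟨P₀ x, _⟩).trans (hf x)⟩

theorem Matrix.toLpLin_symm_mem_unitaryGroup {𝕜 n : Type*} [RCLike 𝕜] [Fintype n]
    [DecidableEq n] (L : EuclideanSpace 𝕜 n →ₗᵢ[𝕜] EuclideanSpace 𝕜 n) :
    (toLpLin 2 2).symm L.toLinearMap ∈ unitaryGroup n 𝕜 := by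
  rw [mem_unitaryGroup_iff', star_eq_conjTranspose]
  apply (toLpLin 2 2).injective
  rw [toLpLin_mul_same, ← toEuclideanLin, toEuclideanLin_conjTranspose_eq_adjoint]
  simp

section PartialTrace

variable {A B : Type*}

def sliceA (j : B) : (A × B → ℂ) →ₗ[ℂ] EuclideanSpace ℂ A :=
  (WithLp.linearEquiv 2 ℂ (A → ℂ)).symm.toLinearMap ∘ₗ LinearMap.funLeft ℂ ℂ fun i => (i, j)

@[simp]
theorem sliceA_apply (j : B) (ψ : A × B → ℂ) (i : A) : sliceA j ψ i = ψ (i, j) := rfl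

variable [Fintype A]

theorem ptrA_apply_eq_inner (ψ : A × B → ℂ) (j q : B) :
    ptrA ψ j q = ⟪sliceA q ψ, sliceA j ψ⟫_ℂ := by
  simp [ptrA, PiLp.inner_apply]

theorem inner_sliceA_eq_of_ptrA_eq {M : Type*} [AddCommGroup M] [Module ℂ M]
    (T₀ T₁ : M →ₗ[ℂ] (A × B → ℂ)) (h : ∀ x, ptrA (T₀ x) = ptrA (T₁ x)) (x y : M) (j q : B) :
    ⟪sliceA q (T₀ x), sliceA j (T₀ y)⟫_ℂ = ⟪sliceA q (T₁ x), sliceA j (T₁ y)⟫_ℂ := by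
  let β : (M →ₗ[ℂ] (A × B → ℂ)) → M →ₗ⋆[ℂ] M →ₗ[ℂ] ℂ := fun T =>
    ((innerₛₗ ℂ).comp (sliceA q ∘ₗ T)).compl₂ (sliceA j ∘ₗ T)
  have halt : (β T₀ - β T₁).IsAlt := fun x => by
    simp [β, ← ptrA_apply_eq_inner, h]
  simpa [β, sub_eq_zero] using LinearMap.congr_fun₂ halt.eq_zero x y

theorem kronId_mulVec_apply [DecidableEq B] [Fintype B] (S : Matrix A A ℂ) (ψ : A × B → ℂ)
    (i : A) (j : B) : (kronId S *ᵥ ψ) (i, j) = (S *ᵥ fun x => ψ (x, j)) i := by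
  simp [kronId, mulVec, dotProduct, Fintype.sum_prod_type, one_apply]

theorem exists_mem_unitaryGroup_kronId_mulVec_eq_of_ptrA_eq [DecidableEq A] [Fintype B]
    [DecidableEq B] {M : Type*} [AddCommGroup M] [Module ℂ M] (T₀ T₁ : M →ₗ[ℂ] (A × B → ℂ))
    (h : ∀ x, ptrA (T₀ x) = ptrA (T₁ x)) :
    ∃ S ∈ unitaryGroup A ℂ, ∀ x, kronId S *ᵥ T₀ x = T₁ x := by
  -- `P T c = ∑ j, T (c j) (·, j)`: one map carrying all slices, so that a single isometry
  -- serves every `j` and every `x` at once.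
  let P : (M →ₗ[ℂ] (A × B → ℂ)) → (B → M) →ₗ[ℂ] EuclideanSpace ℂ A := fun T =>
    ∑ j, sliceA j ∘ₗ T ∘ₗ LinearMap.proj j
  have hP : ∀ T j x, P T (Pi.single j x) = sliceA j (T x) := by
    intro T j x
    simp [P, Pi.single_apply, apply_ite]
  have hnorm : ∀ c, ‖P T₀ c‖ = ‖P T₁ c‖ := by
    intro c
    simp only [norm_eq_sqrt_re_inner (𝕜 := ℂ), P, LinearMap.coe_sum, Finset.sum_apply,
      LinearMap.comp_apply, LinearMap.proj_apply, sum_inner, inner_sum,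
      inner_sliceA_eq_of_ptrA_eq T₀ T₁ h]
  obtain ⟨L, hL⟩ := LinearMap.exists_linearIsometry_comp_eq (P T₀) (P T₁) hnorm
  refine ⟨_, toLpLin_symm_mem_unitaryGroup L, fun x => funext fun ⟨i, j⟩ => ?_⟩
  have hS := ofLp_toLpLin 2 2 ((toLpLin 2 2).symm L.toLinearMap) (sliceA j (T₀ x))
  rw [LinearEquiv.apply_symm_apply, toLin'_apply] at hS
  rw [kronId_mulVec_apply]
  have := congrArg (· i) (hL (Pi.single j x))
  simp only [hP] at this
  exact (congrFun hS i).symm.trans this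

end PartialTrace

def tensorWith {A B : Type*} (e : A → ℂ) : (B → ℂ) →ₗ[ℂ] (A × B → ℂ) :=
  LinearMap.pi fun p => e p.1 • LinearMap.proj p.2

theorem nonstatic_binding_not_concealing_general
    {A B : Type*} [Fintype A] [Fintype B] [DecidableEq A] [DecidableEq B]
    (e₀ e₁ : A → ℂ)
    (U : Matrix.unitaryGroup (A × B) ℂ)
    (ψ₀ ψ₁ : (B → ℂ) → (A × B → ℂ))
    (hψ₀ : ∀ φ : B → ℂ, ψ₀ φ = (U : Matrix (A × B) (A × B) ℂ).mulVec (fun p => e₀ p.1 * φ p.2))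
    (hψ₁ : ∀ φ : B → ℂ, ψ₁ φ = (U : Matrix (A × B) (A × B) ℂ).mulVec (fun p => e₁ p.1 * φ p.2))
    (hbinding : ¬ ∃ S ∈ Matrix.unitaryGroup A ℂ,
      ∀ φ : B → ℂ, (kronId S).mulVec (ψ₀ φ) = ψ₁ φ) :
    ∃ φ : B → ℂ, ptrA (ψ₀ φ) ≠ ptrA (ψ₁ φ) := by
  by_contra! hconcealing
  have hψ : ∀ e φ, (U : Matrix (A × B) (A × B) ℂ).mulVec (fun p => e p.1 * φ p.2) =
      ((U : Matrix (A × B) (A × B) ℂ).mulVecLin ∘ₗ tensorWith e) φ := fun _ _ => rfl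
  obtain ⟨S, hS, hST⟩ := exists_mem_unitaryGroup_kronId_mulVec_eq_of_ptrA_eq
    (_ ∘ₗ tensorWith e₀) (_ ∘ₗ tensorWith e₁) fun φ => by
      simpa only [hψ₀, hψ₁, hψ] using hconcealing φ
  exact hbinding ⟨S, hS, fun φ => by simpa only [hψ₀, hψ₁, hψ] using hST φ⟩

/-- A perfectly binding non-static QBC cannot be perfectly concealing: if no fixed local
unitary `S` on `A` works for every receiver state `φ`, then for some `φ` the receiver's
reduced density matrix depends on the committed bit. -/
theorem nonstatic_binding_not_concealing
    {A B : Type*} [Fintype A] [Fintype B] [DecidableEq A] [DecidableEq B]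
    [Nonempty A] [Nonempty B]
    (z o : A) (hzo : z ≠ o)
    (e₀ e₁ : A → ℂ)
    (he₀ : e₀ = fun i => if i = z then 1 else 0)
    (he₁ : e₁ = fun i => if i = o then 1 else 0)
    (U : Matrix.unitaryGroup (A × B) ℂ)
    (ψ₀ ψ₁ : (B → ℂ) → (A × B → ℂ))
    (hψ₀ : ∀ φ : B → ℂ, ψ₀ φ = (U : Matrix (A × B) (A × B) ℂ).mulVec (fun p => e₀ p.1 * φ p.2))
    (hψ₁ : ∀ φ : B → ℂ, ψ₁ φ = (U : Matrix (A × B) (A × B) ℂ).mulVec (fun p => e₁ p.1 * φ p.2))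
    (hbinding : ¬ ∃ S ∈ Matrix.unitaryGroup A ℂ,
      ∀ φ : B → ℂ, (kronId S).mulVec (ψ₀ φ) = ψ₁ φ) :
    ∃ φ : B → ℂ, ptrA (ψ₀ φ) ≠ ptrA (ψ₁ φ) :=
  nonstatic_binding_not_concealing_general e₀ e₁ U ψ₀ ψ₁ hψ₀ hψ₁ hbinding
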